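/- For each integer m ≥ 2, define w(m) : ℕ → ℝ by w(m) 0 = 1/2 and w(m) (k+1) = (1 + w(m) k − √((1 − w(m) k)² + 1/m))/2, and set d(m) k = (1/2)·(1 + (1 − w(m) k)/√((1 − w(m) k)² + 1/m)). Then the products p(m) = ∏_{k=0}^{m−2} d(m) k converge to 1/√3 as m → ∞. -/

import Mathlib

open Filter

/-- The critical iterates `w(m)₀ = 1/2`, `w(m)_{k+1} = (1 + w(m)_k − √((1 − w(m)_k)² + 1/m))/2`. -/
noncomputable def wG (m : ℕ) : ℕ → ℝ
  | 0 => 1 / 2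
  | k + 1 => (1 + wG m k - Real.sqrt ((1 - wG m k) ^ 2 + 1 / (m : ℝ))) / 2

/-- The derivative factors `d(m)_k = (1/2)·(1 + (1 − w(m)_k)/√((1 − w(m)_k)² + 1/m))`. -/
noncomputable def dG (m k : ℕ) : ℝ :=
  (1 / 2) * (1 + (1 - wG m k) / Real.sqrt ((1 - wG m k) ^ 2 + 1 / (m : ℝ)))

namespace GAux

noncomputable def u (m k : ℕ) : ℝ := 1 - wG m k

lemma u_zero (m : ℕ) : u m 0 = 1/2 := by simp [u, wG]; norm_num

lemma u_succ (m k : ℕ) :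
    u m (k+1) = (u m k + Real.sqrt ((u m k)^2 + 1/(m:ℝ))) / 2 := by
  show 1 - (1 + wG m k - Real.sqrt ((1 - wG m k) ^ 2 + 1 / (m : ℝ))) / 2 = _
  unfold u
  ring

lemma inv_nonneg' (m : ℕ) : 0 ≤ 1/(m:ℝ) := by positivity

lemma u_lb (m : ℕ) : ∀ k, 1/2 ≤ u m k := by
  intro k
  induction k with
  | zero => rw [u_zero]
  | succ k ih =>
    rw [u_succ]
    have h0 : 0 ≤ u m k := by linarith
    have h1 : u m k ≤ Real.sqrt ((u m k)^2 + 1/(m:ℝ)) := by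
      have := Real.sqrt_le_sqrt (by linarith [inv_nonneg' m] : (u m k)^2 ≤ (u m k)^2 + 1/(m:ℝ))
      rwa [Real.sqrt_sq h0] at this
    linarith

noncomputable def z (m k : ℕ) : ℝ := 4 * m * (u m (k+1))^2

lemma z_ge (m k : ℕ) (hm : 1 ≤ m) : (m:ℝ) ≤ z m k := by
  have h := u_lb m (k+1)
  have hm' : (1:ℝ) ≤ m := by exact_mod_cast hm
  have h1 : (1:ℝ) ≤ 4*(u m (k+1))^2 := by nlinarith
  unfold z
  nlinarith

lemma z_pos (m k : ℕ) (hm : 1 ≤ m) : 0 < z m k := by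
  have := z_ge m k hm
  have hm' : (1:ℝ) ≤ m := by exact_mod_cast hm
  linarith

lemma key (m k : ℕ) (hm : 1 ≤ m) :
    (u m (k+1)) * (u m k) = (u m (k+1))^2 - 1/(4*(m:ℝ)) := by
  have h0 : 0 ≤ u m k := by linarith [u_lb m k]
  have hrad : 0 ≤ (u m k)^2 + 1/(m:ℝ) := by positivity
  have hs2 : (Real.sqrt ((u m k)^2 + 1/(m:ℝ)))^2 = (u m k)^2 + 1/(m:ℝ) := Real.sq_sqrt hrad
  have hb : 2 * u m (k+1) = u m k + Real.sqrt ((u m k)^2 + 1/(m:ℝ)) := by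
    rw [u_succ]; ring
  have hmpos : (0:ℝ) < m := by exact_mod_cast hm
  have hme : (4*(m:ℝ)) * (1/(4*(m:ℝ))) = 1 := by field_simp
  set s := Real.sqrt ((u m k)^2 + 1/(m:ℝ)) with hsdef
  have hm4 : (1:ℝ)/(4*(m:ℝ)) = (1/(m:ℝ))/4 := by ring
  rw [hm4]
  linear_combination (-(u m (k+1))/2 + u m k/4 - s/4) * hb + (-(1:ℝ)/4) * hs2

lemma dG_eq (m k : ℕ) (hm : 1 ≤ m) : dG m k = z m k / (z m k + 1) := by
  have h0 : 1/2 ≤ u m k := u_lb m k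
  have hb0 : 1/2 ≤ u m (k+1) := u_lb m (k+1)
  have hmpos : (0:ℝ) < m := by exact_mod_cast hm
  have hrad : 0 < (u m k)^2 + 1/(m:ℝ) := by positivity
  set s := Real.sqrt ((u m k)^2 + 1/(m:ℝ)) with hsdef
  have hspos : 0 < s := Real.sqrt_pos.2 hrad
  have hb : 2 * u m (k+1) = u m k + s := by rw [u_succ]; ring
  have hkey := key m k hm
  have hbs : u m (k+1) * s = (u m (k+1))^2 + 1/(4*(m:ℝ)) := by
    have hseq : s = 2*(u m (k+1)) - u m k := by linarith
    rw [hseq]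
    linear_combination (-1 : ℝ) * hkey
  have hd : dG m k = (1/2)*(1 + (u m k)/s) := rfl
  have hd2 : dG m k = u m (k+1) / s := by
    rw [hd, eq_div_iff hspos.ne']
    field_simp
    linear_combination (-1 : ℝ) * hb
  have hZ1 : 0 < 4*(m:ℝ)*(u m (k+1))^2 + 1 := by positivity
  have hme4 : 4*(m:ℝ) * (1/(4*(m:ℝ))) = 1 := by field_simp
  rw [hd2]
  unfold z
  rw [div_eq_div_iff hspos.ne' hZ1.ne']
  have hmm' : (m:ℝ)*(m:ℝ)⁻¹ = 1 := mul_inv_cancel₀ (ne_of_gt hmpos)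
  linear_combination (-(4*(m:ℝ)*(u m (k+1)))) * hbs + (-(u m (k+1))) * hmm'

lemma z_rec (m k : ℕ) (hm : 1 ≤ m) :
    z m k + 2 = z m (k+1) + 1/(z m (k+1)) := by
  have hb0 : 1/2 ≤ u m (k+2) := u_lb m (k+2)
  have hmpos : (0:ℝ) < m := by exact_mod_cast hm
  have hk := key m (k+1) hm
  have hbne : u m (k+2) ≠ 0 := by linarith
  have hmm' : (m:ℝ)*(m:ℝ)⁻¹ = 1 := mul_inv_cancel₀ (ne_of_gt hmpos)
  have ha : u m (k+1) = u m (k+2) - 1/(4*(m:ℝ)*(u m (k+2))) := by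
    field_simp
    linear_combination (4*(m:ℝ)) * hk + (-(1:ℝ)) * hmm'
  show 4*(m:ℝ)*(u m (k+1))^2 + 2 = 4*(m:ℝ)*(u m (k+2))^2 + 1/(4*(m:ℝ)*(u m (k+2))^2)
  rw [ha]
  clear hmm'
  field_simp
  ring1

lemma z0_le (m : ℕ) (hm : 1 ≤ m) : z m 0 ≤ (m:ℝ) + 3 := by
  have hmpos : (0:ℝ) < m := by exact_mod_cast hm
  have hm' : (1:ℝ) ≤ m := by exact_mod_cast hm
  have hele : 1/(m:ℝ) ≤ 1 := by rw [div_le_one hmpos]; exact hm'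
  have hme : (m:ℝ)*(1/(m:ℝ)) = 1 := by field_simp
  have hu1 : u m 1 = (1/2 + Real.sqrt (1/4 + 1/(m:ℝ)))/2 := by
    rw [u_succ, u_zero]; norm_num
  have hsle : Real.sqrt (1/4 + 1/(m:ℝ)) ≤ 1/2 + 1/(m:ℝ) := by
    have h1 : (1/4 + 1/(m:ℝ)) ≤ (1/2 + 1/(m:ℝ))^2 := by nlinarith [sq_nonneg (1/(m:ℝ))]
    calc Real.sqrt (1/4 + 1/(m:ℝ)) ≤ Real.sqrt ((1/2 + 1/(m:ℝ))^2) := Real.sqrt_le_sqrt h1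
      _ = 1/2 + 1/(m:ℝ) := Real.sqrt_sq (by positivity)
  have ht0 : 0 ≤ Real.sqrt (1/4 + 1/(m:ℝ)) := Real.sqrt_nonneg _
  have hme2 : (m:ℝ)*(1/(m:ℝ))^2 = 1/(m:ℝ) := by field_simp
  have hsq : (1/2 + Real.sqrt (1/4 + 1/(m:ℝ)))^2 ≤ (1 + 1/(m:ℝ))^2 := by nlinarith
  show 4*(m:ℝ)*(u m 1)^2 ≤ (m:ℝ) + 3
  rw [hu1]
  nlinarith [mul_le_mul_of_nonneg_left hsq hmpos.le]


lemma z_le (m : ℕ) (hm : 1 ≤ m) : ∀ k, z m k ≤ (m:ℝ) + 3 + 2*k := by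
  intro k
  induction k with
  | zero => simpa using z0_le m hm
  | succ k ih =>
    have hrec := z_rec m k hm
    have hp : 0 < z m (k+1) := z_pos m (k+1) hm
    have : 0 < 1/(z m (k+1)) := by positivity
    push_cast
    push_cast at ih
    linarith

lemma z_ge' (m : ℕ) (hm : 1 ≤ m) : ∀ k, (m:ℝ) + 2*k - k/(m:ℝ) ≤ z m k := by
  intro k
  have hmpos : (0:ℝ) < m := by exact_mod_cast hm
  induction k with
  | zero => simpa using z_ge m 0 hm
  | succ k ih =>
    have hrec := z_rec m k hm
    have hp : (m:ℝ) ≤ z m (k+1) := z_ge m (k+1) hm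
    have hinv : 1/(z m (k+1)) ≤ 1/(m:ℝ) := by
      apply one_div_le_one_div_of_le hmpos hp
    have hdiv : ((k:ℝ)+1)/(m:ℝ) = (k:ℝ)/(m:ℝ) + 1/(m:ℝ) := by ring
    push_cast
    push_cast at ih
    linarith


lemma dG_pos (m k : ℕ) (hm : 1 ≤ m) : 0 < dG m k := by
  rw [dG_eq m k hm]
  have hz := z_pos m k hm
  exact div_pos hz (by linarith)

lemma log_ge_sub (x : ℝ) (hx : 0 < x) : 1 - 1/x ≤ Real.log x := by
  have h := Real.log_le_sub_one_of_pos (show (0:ℝ) < x⁻¹ by positivity)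
  rw [Real.log_inv] at h
  rw [one_div]
  linarith

lemma ratio_tendsto (a b : ℝ) :
    Tendsto (fun m : ℕ => (3*(m:ℝ) + a)/((m:ℝ) + b)) atTop (nhds 3) := by
  have hmb : Tendsto (fun m : ℕ => (m:ℝ) + b) atTop atTop :=
    tendsto_atTop_add_const_right _ b tendsto_natCast_atTop_atTop
  have h0 : Tendsto (fun m : ℕ => (a - 3*b)/((m:ℝ) + b)) atTop (nhds 0) :=
    Tendsto.div_atTop tendsto_const_nhds hmb
  have h3 : Tendsto (fun m : ℕ => 3 + (a - 3*b)/((m:ℝ) + b)) atTop (nhds 3) := by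
    simpa using h0.const_add 3
  apply h3.congr'
  filter_upwards [hmb.eventually_gt_atTop 0] with m hmb0
  field_simp
  ring

lemma log_diff_tendsto (a b : ℝ) :
    Tendsto (fun m : ℕ => (Real.log (3*(m:ℝ) + a) - Real.log ((m:ℝ) + b))/2) atTop
      (nhds (Real.log 3 / 2)) := by
  have h1 := ratio_tendsto a b
  have h2 : Tendsto (fun m : ℕ => Real.log ((3*(m:ℝ) + a)/((m:ℝ) + b))) atTop
      (nhds (Real.log 3)) :=
    ((Real.continuousAt_log (by norm_num)).tendsto.comp h1)
  have hmb : Tendsto (fun m : ℕ => (m:ℝ) + b) atTop atTop :=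
    tendsto_atTop_add_const_right _ b tendsto_natCast_atTop_atTop
  have hma : Tendsto (fun m : ℕ => 3*(m:ℝ) + a) atTop atTop := by
    apply tendsto_atTop_add_const_right
    exact Tendsto.const_mul_atTop (by norm_num) tendsto_natCast_atTop_atTop
  have h3 : Tendsto (fun m : ℕ => Real.log (3*(m:ℝ) + a) - Real.log ((m:ℝ) + b)) atTop
      (nhds (Real.log 3)) := by
    apply h2.congr'
    filter_upwards [hmb.eventually_gt_atTop 0, hma.eventually_gt_atTop 0] with m h0 h0'
    rw [Real.log_div (ne_of_gt h0') (ne_of_gt h0)]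
  exact h3.div_const 2

lemma sum_tendsto (c : ℝ) (hc : -1 ≤ c) :
    Tendsto (fun m : ℕ => ∑ k ∈ Finset.range (m-1), 1/((m:ℝ) + 2*k + c)) atTop
      (nhds (Real.log 3 / 2)) := by
  apply tendsto_of_tendsto_of_tendsto_of_le_of_le' (log_diff_tendsto (c-2) c)
      (log_diff_tendsto (c-4) (c-2))
  · -- lower bound
    filter_upwards [eventually_ge_atTop 5] with m hm5
    have hM : (5:ℝ) ≤ m := by exact_mod_cast hm5
    have key : ∀ k ∈ Finset.range (m-1),
        (Real.log ((m:ℝ) + 2*(k+1:ℕ) + c) - Real.log ((m:ℝ) + 2*k + c))/2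
          ≤ 1/((m:ℝ) + 2*k + c) := by
      intro k hk
      set n := (m:ℝ) + 2*k + c with hn
      have hk0 : (0:ℝ) ≤ 2*(k:ℝ) := by positivity
      have hn4 : 4 ≤ n := by rw [hn]; linarith
      have hlog : Real.log (n+2) - Real.log n = Real.log ((n+2)/n) :=
        (Real.log_div (by linarith) (by linarith)).symm
      have hle : Real.log ((n+2)/n) ≤ (n+2)/n - 1 :=
        Real.log_le_sub_one_of_pos (div_pos (by linarith) (by linarith))
      have h2 : (n+2)/n - 1 = 2/n := by field_simp; ring
      have harg : (m:ℝ) + 2*((k:ℕ)+1:ℕ) + c = n + 2 := by rw [hn]; push_cast; ring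
      rw [harg, hlog]
      rw [h2] at hle
      have h1n : 1/n = (2/n)/2 := by ring
      rw [h1n]
      linarith
    have htel : ∑ k ∈ Finset.range (m-1),
        (Real.log ((m:ℝ) + 2*(k+1:ℕ) + c) - Real.log ((m:ℝ) + 2*k + c))
        = Real.log ((m:ℝ) + 2*((m:ℕ)-1:ℕ) + c) - Real.log ((m:ℝ) + 2*(0:ℕ) + c) :=
      Finset.sum_range_sub (fun k => Real.log ((m:ℝ) + 2*(k:ℕ) + c)) (m-1)
    have hcast : ((m-1:ℕ):ℝ) = (m:ℝ) - 1 := by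
      have : 1 ≤ m := by omega
      push_cast [Nat.cast_sub this]
      ring
    calc (Real.log (3*(m:ℝ) + (c-2)) - Real.log ((m:ℝ) + c))/2
        = ∑ k ∈ Finset.range (m-1),
            (Real.log ((m:ℝ) + 2*(k+1:ℕ) + c) - Real.log ((m:ℝ) + 2*k + c))/2 := by
          rw [← Finset.sum_div, htel, hcast]
          norm_num
          ring_nf
      _ ≤ _ := Finset.sum_le_sum key
  · -- upper bound
    filter_upwards [eventually_ge_atTop 5] with m hm5
    have hM : (5:ℝ) ≤ m := by exact_mod_cast hm5
    have key : ∀ k ∈ Finset.range (m-1),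
        1/((m:ℝ) + 2*k + c)
          ≤ (Real.log ((m:ℝ) + 2*(k+1:ℕ) + (c-2)) - Real.log ((m:ℝ) + 2*k + (c-2)))/2 := by
      intro k hk
      set n := (m:ℝ) + 2*k + c with hn
      have hk0 : (0:ℝ) ≤ 2*(k:ℝ) := by positivity
      have hn4 : 4 ≤ n := by rw [hn]; linarith
      have hlog : Real.log n - Real.log (n-2) = Real.log (n/(n-2)) :=
        (Real.log_div (by linarith) (by linarith)).symm
      have hge : 1 - 1/(n/(n-2)) ≤ Real.log (n/(n-2)) :=
        log_ge_sub _ (div_pos (by linarith) (by linarith))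
      have h2 : 1 - 1/(n/(n-2)) = 2/n := by
        rw [one_div_div]
        field_simp
        ring
      have harg1 : (m:ℝ) + 2*((k:ℕ)+1:ℕ) + (c-2) = n := by rw [hn]; push_cast; ring
      have harg2 : (m:ℝ) + 2*(k:ℕ) + (c-2) = n - 2 := by rw [hn]; push_cast; ring
      rw [harg1, harg2, hlog]
      rw [h2] at hge
      have h1n : 1/n = (2/n)/2 := by ring
      rw [h1n]
      linarith
    have htel : ∑ k ∈ Finset.range (m-1),
        (Real.log ((m:ℝ) + 2*(k+1:ℕ) + (c-2)) - Real.log ((m:ℝ) + 2*k + (c-2)))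
        = Real.log ((m:ℝ) + 2*((m:ℕ)-1:ℕ) + (c-2)) - Real.log ((m:ℝ) + 2*(0:ℕ) + (c-2)) :=
      Finset.sum_range_sub (fun k => Real.log ((m:ℝ) + 2*(k:ℕ) + (c-2))) (m-1)
    have hcast : ((m-1:ℕ):ℝ) = (m:ℝ) - 1 := by
      have : 1 ≤ m := by omega
      push_cast [Nat.cast_sub this]
      ring
    calc ∑ k ∈ Finset.range (m-1), 1/((m:ℝ) + 2*k + c)
        ≤ ∑ k ∈ Finset.range (m-1),
            (Real.log ((m:ℝ) + 2*(k+1:ℕ) + (c-2)) - Real.log ((m:ℝ) + 2*k + (c-2)))/2 :=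
          Finset.sum_le_sum key
      _ = (Real.log (3*(m:ℝ) + (c-4)) - Real.log ((m:ℝ) + (c-2)))/2 := by
          rw [← Finset.sum_div, htel, hcast]
          norm_num
          ring_nf

lemma T_tendsto :
    Tendsto (fun m : ℕ => ∑ k ∈ Finset.range (m-1), Real.log (1 + 1/(z m k))) atTop
      (nhds (Real.log 3 / 2)) := by
  apply tendsto_of_tendsto_of_tendsto_of_le_of_le' (sum_tendsto 4 (by norm_num))
      (sum_tendsto (-1) (by norm_num))
  · filter_upwards [eventually_ge_atTop 2] with m hm2
    apply Finset.sum_le_sum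
    intro k hk
    have hm1 : 1 ≤ m := by omega
    have hz := z_pos m k hm1
    have hzle : z m k ≤ (m:ℝ) + 3 + 2*k := z_le m hm1 k
    have h1 : (0:ℝ) < 1 + 1/(z m k) := by positivity
    have hge := log_ge_sub _ h1
    have heq : 1 - 1/(1 + 1/(z m k)) = 1/(z m k + 1) := by
      field_simp
      ring
    rw [heq] at hge
    have h2 : 1/((m:ℝ) + 2*k + 4) ≤ 1/(z m k + 1) := by
      apply one_div_le_one_div_of_le (by linarith)
      linarith
    linarith
  · filter_upwards [eventually_ge_atTop 2] with m hm2
    apply Finset.sum_le_sum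
    intro k hk
    have hm1 : 1 ≤ m := by omega
    have hz := z_pos m k hm1
    have hkm : (k:ℝ) ≤ (m:ℝ) := by
      have : k ≤ m := by
        have := Finset.mem_range.mp hk
        omega
      exact_mod_cast this
    have hmpos : (0:ℝ) < m := by exact_mod_cast hm1
    have hge' := z_ge' m hm1 k
    have hkdiv : (k:ℝ)/(m:ℝ) ≤ 1 := by rw [div_le_one hmpos]; exact hkm
    have hzge : (m:ℝ) + 2*k - 1 ≤ z m k := by linarith
    have hk0 : (0:ℝ) ≤ 2*(k:ℝ) := by positivity
    have hm2' : (2:ℝ) ≤ m := by exact_mod_cast hm2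
    have hlow : (0:ℝ) < (m:ℝ) + 2*k - 1 := by linarith
    have hlog : Real.log (1 + 1/(z m k)) ≤ 1/(z m k) := by
      have := Real.log_le_sub_one_of_pos (show (0:ℝ) < 1 + 1/(z m k) by positivity)
      linarith
    have h2 : 1/(z m k) ≤ 1/((m:ℝ) + 2*k - 1) := one_div_le_one_div_of_le hlow hzge
    have hre : (m:ℝ) + 2*k + -1 = (m:ℝ) + 2*k - 1 := by ring
    rw [hre]
    linarith

end GAux

theorem godelm_top_proportion_tendsto_inv_sqrt_three :
    Tendsto (fun m => ∏ k ∈ Finset.range (m - 1), dG m k) atTop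
      (nhds (1 / Real.sqrt 3)) := by
  have hL : Tendsto (fun m : ℕ => ∑ k ∈ Finset.range (m-1), Real.log (dG m k)) atTop
      (nhds (-(Real.log 3 / 2))) := by
    apply Tendsto.congr' _ (GAux.T_tendsto.neg)
    filter_upwards [eventually_ge_atTop 1] with m hm1
    rw [← Finset.sum_neg_distrib]
    apply Finset.sum_congr rfl
    intro k _
    rw [GAux.dG_eq m k hm1]
    have hz := GAux.z_pos m k hm1
    have heq : GAux.z m k/(GAux.z m k+1) = (1 + 1/(GAux.z m k))⁻¹ := by
      rw [inv_eq_one_div]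
      rw [div_eq_div_iff (by linarith) (by positivity)]
      field_simp
    rw [heq, Real.log_inv]
  have hexp := (Real.continuous_exp.tendsto _).comp hL
  have hval : Real.exp (-(Real.log 3/2)) = 1/Real.sqrt 3 := by
    rw [Real.exp_neg, Real.exp_half, Real.exp_log (by norm_num : (0:ℝ) < 3), one_div]
  rw [← hval]
  apply Tendsto.congr' _ hexp
  filter_upwards [eventually_ge_atTop 1] with m hm1
  show Real.exp (∑ k ∈ Finset.range (m-1), Real.log (dG m k)) = _
  rw [Real.exp_sum]
  apply Finset.prod_congr rfl
  intro k _
  exact Real.exp_log (GAux.dG_pos m k hm1)
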